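/- arXiv:2407.03186 — 4 statements merged into one kernel-verified Lean document; each statement's English description precedes it below -/
import Mathlib

section
/- Assume b_{kk} = 0. Then Ẽ_{+1} · B · F̃_{+1} = Ẽ_{−1} · B · F̃_{−1}; in other words, the mutated matrix obtained as Ẽ_ε · B · F̃_ε is independent of the choice of the sign ε. -/
/-!
STATEMENT 2: Assume b_{kk} = 0. Then Ẽ_{+1} · B · F̃_{+1} = Ẽ_{−1} · B · F̃_{−1};
the mutated matrix obtained as Ẽ_ε · B · F̃_ε is independent of the choice of the sign ε.
-/

/-- The matrix Ẽ_ε: it agrees with the identity matrix except in its k-th column, where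
`(Ẽ_ε)_{kk} = −1` and `(Ẽ_ε)_{ik} = [−ε·b_{ik}]_+` for `i ≠ k`. -/
def Etil {I : Type*} [DecidableEq I] (B : Matrix I I ℚ) (k : I) (ε : ℚ) : Matrix I I ℚ :=
  Matrix.of fun i j =>
    if j = k then (if i = k then -1 else max (-(ε * B i k)) 0)
    else (if i = j then 1 else 0)

/-- The matrix F̃_ε: it agrees with the identity matrix except in its k-th row, where
`(F̃_ε)_{kk} = −1` and `(F̃_ε)_{kj} = [ε·b_{kj}]_+` for `j ≠ k`. -/
def Ftil {I : Type*} [DecidableEq I] (B : Matrix I I ℚ) (k : I) (ε : ℚ) : Matrix I I ℚ :=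
  Matrix.of fun i j =>
    if i = k then (if j = k then -1 else max (ε * B k j) 0)
    else (if i = j then 1 else 0)

/-!
Writing `[x]_+ = (|x| + x) / 2`, every entry of `Ẽ_ε · B · F̃_ε` off the `k`-th row and column
becomes `b_ij + |ε| (|b_ik| b_kj + b_ik |b_kj|) / 2`, the Fomin–Zelevinsky mutation rule scaled
by `|ε|`, while the `k`-th row and column are just negated. So the product depends on `ε` only
through `|ε|`.
-/

lemma max_neg_mul_zero_mul_add_mul_max_mul_zero (e x y : ℚ) :
    max (-(e * x)) 0 * y + x * max (e * y) 0 = |e| * (|x| * y + x * |y|) / 2 := by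
  have hx := max_zero_add_max_neg_zero_eq_abs_self (e * x)
  have hx' := max_zero_sub_max_neg_zero_eq_self (e * x)
  have hy := max_zero_add_max_neg_zero_eq_abs_self (e * y)
  have hy' := max_zero_sub_max_neg_zero_eq_self (e * y)
  rw [abs_mul] at hx hy
  linear_combination (y / 2) * (hx - hx') + (x / 2) * (hy + hy')

section

variable {I : Type*} [DecidableEq I] (B : Matrix I I ℚ) (k : I) (ε : ℚ)

lemma Etil_apply_of_ne {i l : I} (hl : l ≠ k) : Etil B k ε i l = if i = l then 1 else 0 := by
  simp [Etil, hl]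

lemma Ftil_apply_of_ne {l j : I} (hl : l ≠ k) : Ftil B k ε l j = if l = j then 1 else 0 := by
  simp [Ftil, hl]

variable [Fintype I]

lemma Etil_mul_apply (M : Matrix I I ℚ) (i j : I) :
    (Etil B k ε * M) i j =
      if i = k then -M k j else M i j + max (-(ε * B i k)) 0 * M k j := by
  have off_k : ∑ l ∈ {k}ᶜ, Etil B k ε i l * M l j = if i = k then 0 else M i j := by
    rw [Finset.sum_congr rfl fun l hl => by
      rw [Etil_apply_of_ne B k ε (by simpa using hl), ite_mul, one_mul, zero_mul]]
    simp [Finset.sum_ite_eq, ite_not]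
  rw [Matrix.mul_apply, Fintype.sum_eq_add_sum_compl k, off_k]
  split_ifs with hi <;> simp [Etil, hi, add_comm]

lemma mul_Ftil_apply (M : Matrix I I ℚ) (i j : I) :
    (M * Ftil B k ε) i j =
      if j = k then -M i k else M i j + M i k * max (ε * B k j) 0 := by
  have off_k : ∑ l ∈ {k}ᶜ, M i l * Ftil B k ε l j = if j = k then 0 else M i j := by
    rw [Finset.sum_congr rfl fun l hl => by
      rw [Ftil_apply_of_ne B k ε (by simpa using hl), mul_ite, mul_one, mul_zero]]
    simp [Finset.sum_ite_eq', ite_not]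
  rw [Matrix.mul_apply, Fintype.sum_eq_add_sum_compl k, off_k]
  split_ifs with hj
  · simp [Ftil, hj]
  · simp [Ftil, hj, add_comm]

lemma Etil_mul_mul_Ftil_apply (hB : B k k = 0) (i j : I) :
    (Etil B k ε * B * Ftil B k ε) i j =
      if i = k ∨ j = k then -B i j
      else B i j + |ε| * (|B i k| * B k j + B i k * |B k j|) / 2 := by
  rw [mul_Ftil_apply, Etil_mul_apply, Etil_mul_apply]
  by_cases hi : i = k <;> by_cases hj : j = k
  · simp [hi, hj, hB]
  · simp [hi, hj, hB]
  · simp [hi, hj, hB]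
  · simp only [hi, hj, hB, or_self, if_false, mul_zero, add_zero,
      ← max_neg_mul_zero_mul_add_mul_max_mul_zero]
    ring

theorem Etil_mul_mul_Ftil_eq_of_abs_eq {ε' : ℚ} (hB : B k k = 0) (h : |ε| = |ε'|) :
    Etil B k ε * B * Ftil B k ε = Etil B k ε' * B * Ftil B k ε' := by
  ext i j
  simp only [Etil_mul_mul_Ftil_apply _ _ _ hB, h]

end

theorem Etil_mul_B_mul_Ftil_sign_independent {I : Type*} [Fintype I] [DecidableEq I]
    (B : Matrix I I ℚ) (k : I) (hB : B k k = 0) :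
    Etil B k 1 * B * Ftil B k 1 = Etil B k (-1) * B * Ftil B k (-1) :=
  Etil_mul_mul_Ftil_eq_of_abs_eq B k 1 hB (abs_neg 1).symm
end

section
/- Assume B is an integer I × I matrix with b_{kk} = 0. Define x'_i ∈ K by x'_i = x_i for i ≠ k, and x'_k = x_k^{−1} · (∏_{i∈I} x_i^{[b_{ik}]_+} + ∏_{j∈I} x_j^{[−b_{jk}]_+}). For i ∈ I set z_i = ∏_{j∈I} x_j^{b_{ji}} and z'_i = ∏_{j∈I} (x'_j)^{μ_k(B)_{ji}}, where all powers are integer powers of nonzero elements of K (x'_k ≠ 0 and 1 + z_k ≠ 0 in K). Then z'_k = z_k^{−1}, and for every i ≠ k one has z'_i = z_i · z_k^{[b_{ki}]_+} · (1 + z_k)^{−b_{ki}}. -/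
/-!
STATEMENT 5: Assume B is an integer I × I matrix with b_{kk} = 0. Define x'_i ∈ K by
x'_i = x_i for i ≠ k, and x'_k = x_k^{−1} · (∏_{i∈I} x_i^{[b_{ik}]_+} + ∏_{j∈I} x_j^{[−b_{jk}]_+}).
For i ∈ I set z_i = ∏_{j∈I} x_j^{b_{ji}} and z'_i = ∏_{j∈I} (x'_j)^{μ_k(B)_{ji}}.
Then z'_k = z_k^{−1}, and for every i ≠ k one has
z'_i = z_i · z_k^{[b_{ki}]_+} · (1 + z_k)^{−b_{ki}}.

Here K is the field of fractions of the Laurent polynomial ring ℚ[x_i^{±1} : i ∈ I]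
(modeled as the group algebra of ℤ^I over ℚ), and x_i are its variables.
-/

noncomputable section

/-- The Laurent polynomial ring ℚ[x_i^{±1} : i ∈ I]. -/
abbrev LaurentRing (I : Type*) := AddMonoidAlgebra ℚ (I → ℤ)

instance (I : Type*) : IsDomain (LaurentRing I) := NoZeroDivisors.to_isDomain _

/-- The field of fractions K of the Laurent polynomial ring. -/
abbrev LaurentField (I : Type*) := FractionRing (LaurentRing I)

/-- The variable x_i, regarded as a (nonzero) element of K. -/
def xvar {I : Type*} [DecidableEq I] (i : I) : LaurentField I :=
  algebraMap (LaurentRing I) (LaurentField I) (AddMonoidAlgebra.single (Pi.single i 1) 1)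

/-- The mutated matrix μ_k(B): `μ_k(B)_{ij} = −b_{ij}` if `i = k` or `j = k`, and
`μ_k(B)_{ij} = b_{ij} + [b_{ik}]_+·[b_{kj}]_+ − [−b_{ik}]_+·[−b_{kj}]_+` otherwise. -/
def mutate {I : Type*} [DecidableEq I] (B : Matrix I I ℤ) (k : I) : Matrix I I ℤ :=
  Matrix.of fun i j =>
    if i = k ∨ j = k then -B i j
    else B i j + max (B i k) 0 * max (B k j) 0 - max (-B i k) 0 * max (-B k j) 0

/-! Write `x^a := ∏ⱼ xⱼ^{aⱼ}`, let `c` be the `k`-th column of `B` and `q := [-c]₊`.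
Since `[c]₊ = q + c`, the exchange relation factors as `x'ₖ = x^{q - eₖ} (1 + zₖ)`. As `x'` agrees
with `x` off `k`, `z'ᵢ = x'ₖ^{μₖ(B)ₖᵢ} · x^ν` with `ν` the `i`-th column of `μₖ(B)` with its `k`-th
entry replaced by `0`; comparing exponent vectors then comes down to `[b]₊ - [-b]₊ = b`. The
argument works in any semifield for any family of nonzero `xⱼ`. -/

open scoped Matrix

section LaurentMonomial

variable {I F : Type*} [Fintype I] [Semifield F]

def laurentMonomial (x : I → F) (a : I → ℤ) : F := ∏ j, x j ^ a j

variable {x : I → F}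

theorem laurentMonomial_add (hx : ∀ j, x j ≠ 0) (a b : I → ℤ) :
    laurentMonomial x (a + b) = laurentMonomial x a * laurentMonomial x b := by
  simp only [laurentMonomial, Pi.add_apply, zpow_add₀ (hx _), Finset.prod_mul_distrib]

theorem laurentMonomial_zsmul (n : ℤ) (a : I → ℤ) :
    laurentMonomial x (n • a) = laurentMonomial x a ^ n := by
  simp only [laurentMonomial, Pi.smul_apply, smul_eq_mul, mul_comm n, zpow_mul,
    Finset.prod_zpow]

theorem laurentMonomial_neg (a : I → ℤ) :
    laurentMonomial x (-a) = (laurentMonomial x a)⁻¹ := by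
  simpa using laurentMonomial_zsmul (x := x) (-1) a

theorem laurentMonomial_single [DecidableEq I] (k : I) (n : ℤ) :
    laurentMonomial x (Pi.single k n) = x k ^ n := by
  rw [laurentMonomial, Finset.prod_eq_single k (fun j _ hj => by simp [hj]) (by simp)]
  simp

theorem prod_zpow_eq_zpow_mul_laurentMonomial_update [DecidableEq I] {y : I → F} {k : I}
    (hy : ∀ j, j ≠ k → y j = x j) (a : I → ℤ) :
    ∏ j, y j ^ a j = y k ^ a k * laurentMonomial x (Function.update a k 0) := by
  rw [laurentMonomial, Fintype.prod_eq_mul_prod_compl k, Fintype.prod_eq_mul_prod_compl k]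
  simp only [Function.update_self, zpow_zero, one_mul]
  refine congrArg _ (Finset.prod_congr rfl fun j hj => ?_)
  have hjk : j ≠ k := by simpa using hj
  rw [hy j hjk, Function.update_of_ne hjk]

end LaurentMonomial

theorem xvar_ne_zero {I : Type*} [DecidableEq I] (i : I) : xvar i ≠ 0 :=
  (map_ne_zero_iff _ (IsFractionRing.injective _ _)).mpr (by simp)

section Mutation

variable {I : Type*} [DecidableEq I] {B : Matrix I I ℤ} {k : I}

theorem update_mutate_transpose_self (hB : B k k = 0) :
    Function.update ((mutate B k)ᵀ k) k 0 = -Bᵀ k := by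
  funext j
  rcases eq_or_ne j k with rfl | hj
  · simp [hB]
  · simp [Function.update_of_ne hj, mutate]

theorem update_mutate_transpose_of_ne (hB : B k k = 0) {i : I} (hi : i ≠ k) :
    -B k i • ((fun j => max (-B j k) 0) - Pi.single k 1) +
        Function.update ((mutate B k)ᵀ i) k 0 = Bᵀ i + max (B k i) 0 • Bᵀ k := by
  funext j
  rcases eq_or_ne j k with rfl | hj
  · simp [hB]
  · have key : max (B k i) 0 - max (-B k i) 0 = B k i := max_zero_sub_max_neg_zero_eq_self _
    simp only [Pi.add_apply, Pi.smul_apply, Pi.sub_apply, smul_eq_mul, Function.update_of_ne hj,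
      Pi.single_eq_of_ne hj, Matrix.transpose_apply, mutate, Matrix.of_apply, hj, hi, or_self,
      if_false, sub_zero]
    have hpos : max (B j k) 0 = max (-B j k) 0 + B j k := by omega
    rw [hpos]
    linear_combination max (-B j k) 0 * key

variable {F : Type*} [Fintype I] [Semifield F] {x x' : I → F}

theorem mutated_var_eq_mul_one_add (hx : ∀ j, x j ≠ 0)
    (hx'k : x' k = (x k)⁻¹ *
      (laurentMonomial x (fun j => max (B j k) 0) + laurentMonomial x fun j => max (-B j k) 0)) :
    x' k = laurentMonomial x ((fun j => max (-B j k) 0) - Pi.single k 1) *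
      (1 + laurentMonomial x (Bᵀ k)) := by
  have hpos : (fun j => max (B j k) 0) = (fun j => max (-B j k) 0) + Bᵀ k := by
    funext j
    simp only [Pi.add_apply, Matrix.transpose_apply]
    omega
  rw [hx'k, hpos, sub_eq_add_neg, laurentMonomial_add hx, laurentMonomial_add hx,
    laurentMonomial_neg, laurentMonomial_single, zpow_one]
  ring

theorem prod_zpow_mutate_self (hB : B k k = 0) (hx' : ∀ j, j ≠ k → x' j = x j) :
    ∏ j, x' j ^ mutate B k j k = (laurentMonomial x (Bᵀ k))⁻¹ := by
  refine (prod_zpow_eq_zpow_mul_laurentMonomial_update hx' ((mutate B k)ᵀ k)).trans ?_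
  rw [update_mutate_transpose_self hB, laurentMonomial_neg]
  simp [mutate, hB]

theorem prod_zpow_mutate_of_ne (hx : ∀ j, x j ≠ 0) (hB : B k k = 0)
    (hx'k : x' k = (x k)⁻¹ *
      (laurentMonomial x (fun j => max (B j k) 0) + laurentMonomial x fun j => max (-B j k) 0))
    (hx' : ∀ j, j ≠ k → x' j = x j) {i : I} (hi : i ≠ k) :
    ∏ j, x' j ^ mutate B k j i = laurentMonomial x (Bᵀ i) *
      laurentMonomial x (Bᵀ k) ^ max (B k i) 0 * (1 + laurentMonomial x (Bᵀ k)) ^ (-B k i) := by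
  have hki : mutate B k k i = -B k i := by simp [mutate]
  refine (prod_zpow_eq_zpow_mul_laurentMonomial_update hx' ((mutate B k)ᵀ i)).trans ?_
  rw [Matrix.transpose_apply, hki, mutated_var_eq_mul_one_add hx hx'k, mul_zpow,
    ← laurentMonomial_zsmul, ← laurentMonomial_zsmul, mul_right_comm, ← laurentMonomial_add hx,
    ← laurentMonomial_add hx,
    update_mutate_transpose_of_ne hB hi]

end Mutation

theorem exchange_relation_y {I : Type*} [Fintype I] [DecidableEq I]
    (B : Matrix I I ℤ) (k : I) (hB : B k k = 0)
    -- the mutated cluster variables x'_i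
    (x' : I → LaurentField I)
    (hx'k : x' k = (xvar k)⁻¹ *
      ((∏ i : I, xvar i ^ (max (B i k) 0)) + ∏ j : I, xvar j ^ (max (-B j k) 0)))
    (hx' : ∀ i, i ≠ k → x' i = xvar i)
    -- the elements z_i and z'_i
    (z z' : I → LaurentField I)
    (hz : ∀ i, z i = ∏ j : I, xvar j ^ (B j i))
    (hz' : ∀ i, z' i = ∏ j : I, (x' j) ^ (mutate B k j i)) :
    z' k = (z k)⁻¹ ∧
      ∀ i, i ≠ k → z' i = z i * (z k) ^ (max (B k i) 0) * (1 + z k) ^ (-(B k i)) := by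
  have hzk : z k = laurentMonomial xvar (Bᵀ k) := hz k
  refine ⟨?_, fun i hi => ?_⟩
  · rw [hz' k, hzk]
    exact prod_zpow_mutate_self hB hx'
  · rw [hz' i, hz i, hzk]
    exact prod_zpow_mutate_of_ne xvar_ne_zero hB hx'k hx' hi
end
end

section
/- Let Θ, Θ' ⊆ ℤ^I, let S = {s_g : g∈Θ} be a Θ-pointed family, and let Z = {z_h : h∈Θ'} be a Θ'-pointed family. If every z_h lies in A^Θ and Z is a ℤ-basis of A^Θ = ⊕_{g∈Θ} ℤ·s_g, then Θ' = Θ. -/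
/-!
Write an `h`-pointed `w ∈ A^Θ` as `∑ c_g s_g`. Since `x^h` occurs in `w`, some `g` with
`c_g ≠ 0` dominates `h`; among these take a `⪯`-maximal `g₀`. By maximality no other term
contains `x^{g₀}`, so its coefficient in `w` is `c_{g₀} ≠ 0`, whence `g₀ ⪯ h ⪯ g₀` and
`h = g₀ ∈ Θ`: the degree of a pointed element of `A^Θ` lies in `Θ`. As `Z` and `S` span the
same module, this applies both ways.
-/

noncomputable section

namespace CAFreeze

variable {I : Type*} [Fintype I] [DecidableEq I]

/-- The Laurent polynomial ring LP = ℤ[x_i^{±1} : i ∈ I], modeled as the group algebra of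
ℤ^I over ℤ. -/
abbrev LP (I : Type*) := AddMonoidAlgebra ℤ (I → ℤ)

/-- The monomial x^m for an exponent vector m ∈ ℤ^I. -/
def mono (m : I → ℤ) : LP I := AddMonoidAlgebra.ofCoeff (Finsupp.single m 1)

/-- The coefficient of the monomial x^m in z ∈ LP. -/
def coeff (z : LP I) (m : I → ℤ) : ℤ := (AddMonoidAlgebra.coeff z : (I → ℤ) →₀ ℤ) m

variable (Iuf : Finset I) (Bt : I → {i // i ∈ Iuf} → ℤ)

/-- The linear map p* : ℤ^{I_uf} → ℤ^I, p*(n) = B̃·n. -/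
def pstar (n : {i // i ∈ Iuf} → ℤ) : I → ℤ := fun i => ∑ kk : {i // i ∈ Iuf}, Bt i kk * n kk

/-- p*(n) for n ∈ ℕ^{I_uf}. -/
def pstarN (n : {i // i ∈ Iuf} → ℕ) : I → ℤ := pstar Iuf Bt fun kk => (n kk : ℤ)

/-- supp n = {k ∈ I_uf : n_k ≠ 0}, as a subset of I. -/
def suppn (n : {i // i ∈ Iuf} → ℕ) : Set I := {i | ∃ h : i ∈ Iuf, n ⟨i, h⟩ ≠ 0}

/-- LP_{⪯m}: the ℤ-submodule of LP spanned by the monomials x^{m+p*(n)}, n ∈ ℕ^{I_uf}. -/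
def LPle (m : I → ℤ) : Submodule ℤ (LP I) :=
  Submodule.span ℤ {z : LP I | ∃ n : {i // i ∈ Iuf} → ℕ, z = mono (m + pstarN Iuf Bt n)}

open Classical in
/-- The freezing operator frz_{F,m}: it keeps the monomials x^{m+p*(n)} with
supp n ∩ F = ∅ and kills the monomials x^{m+p*(n)} with supp n ∩ F ≠ ∅. -/
def frz (F : Finset I) (m : I → ℤ) (z : LP I) : LP I :=
  AddMonoidAlgebra.ofCoeff <| Finsupp.filter
    (fun e => ∃ n : {i // i ∈ Iuf} → ℕ, e = m + pstarN Iuf Bt n ∧ suppn Iuf n ∩ (F : Set I) = ∅) (AddMonoidAlgebra.coeff z)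

/-- z ∈ LP is pointed at g: z = Σ_{n ∈ ℕ^{I_uf}} c_n x^{g+p*(n)} with c_0 = 1. -/
def Pointed (g : I → ℤ) (z : LP I) : Prop :=
  coeff z g = 1 ∧
    ∀ e ∈ (AddMonoidAlgebra.coeff z : (I → ℤ) →₀ ℤ).support, ∃ n : {i // i ∈ Iuf} → ℕ, e = g + pstarN Iuf Bt n

/-- supp z = ∪_{c_n ≠ 0} supp n, for a g-pointed z = Σ_n c_n x^{g+p*(n)}. -/
def suppz (g : I → ℤ) (z : LP I) : Set I :=
  ⋃ n ∈ {n : {i // i ∈ Iuf} → ℕ | coeff z (g + pstarN Iuf Bt n) ≠ 0}, suppn Iuf n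

/-- suppDim z ∈ ℕ^{I_uf}: the coordinatewise maximum of {n : c_n ≠ 0}, for a g-pointed
z = Σ_n c_n x^{g+p*(n)}. -/
def suppDim (g : I → ℤ) (z : LP I) : {i // i ∈ Iuf} → ℕ :=
  fun kk => sSup {d : ℕ | ∃ n : {i // i ∈ Iuf} → ℕ, coeff z (g + pstarN Iuf Bt n) ≠ 0 ∧ n kk = d}

section Dominance

omit [Fintype I] [DecidableEq I]

/-- `coneBelow g = {g' | g' ⪯ g}` in the dominance order. -/
def coneBelow (g : I → ℤ) : Set (I → ℤ) := Set.range fun n => g + pstarN Iuf Bt n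

variable {Iuf Bt}

lemma pstarN_zero : pstarN Iuf Bt 0 = 0 := by
  funext i
  simp [pstarN, pstar]

lemma pstarN_add (n m : {i // i ∈ Iuf} → ℕ) :
    pstarN Iuf Bt (n + m) = pstarN Iuf Bt n + pstarN Iuf Bt m := by
  funext i
  simp [pstarN, pstar, mul_add, Finset.sum_add_distrib]

lemma pstarN_injective (hfull : Function.Injective (pstar Iuf Bt)) :
    Function.Injective (pstarN Iuf Bt) :=
  fun _ _ h => funext fun k => Int.ofNat_inj.1 (congrFun (hfull h) k)

lemma self_mem_coneBelow (g : I → ℤ) : g ∈ coneBelow Iuf Bt g :=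
  ⟨0, by simp [pstarN_zero]⟩

lemma coneBelow_subset_of_mem {g g' : I → ℤ} (h : g' ∈ coneBelow Iuf Bt g) :
    coneBelow Iuf Bt g' ⊆ coneBelow Iuf Bt g := by
  rintro _ ⟨m, rfl⟩
  obtain ⟨n, rfl⟩ := h
  exact ⟨n + m, by simp only [pstarN_add, add_assoc]⟩

lemma mem_coneBelow_antisymm (hfull : Function.Injective (pstar Iuf Bt))
    {g g' : I → ℤ} (h : g' ∈ coneBelow Iuf Bt g) (h' : g ∈ coneBelow Iuf Bt g') : g' = g := by
  obtain ⟨n, rfl⟩ := h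
  obtain ⟨m, hm⟩ := h'
  have hnm : pstarN Iuf Bt (n + m) = pstarN Iuf Bt 0 := by
    rw [pstarN_add, pstarN_zero]
    simpa [add_assoc] using hm
  have hn : n = 0 := (add_eq_zero.1 (pstarN_injective hfull hnm)).1
  simp [hn, pstarN_zero]

lemma Pointed.mem_coneBelow {g e : I → ℤ} {z : LP I} (hz : Pointed Iuf Bt g z)
    (he : coeff z e ≠ 0) : e ∈ coneBelow Iuf Bt g := by
  obtain ⟨n, rfl⟩ := hz.2 e (Finsupp.mem_support_iff.2 he)
  exact ⟨n, rfl⟩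

lemma coeff_linearCombination (s : (I → ℤ) → LP I) (l : (I → ℤ) →₀ ℤ) (e : I → ℤ) :
    coeff (Finsupp.linearCombination ℤ s l) e = l.sum fun g c => c * coeff (s g) e := by
  simp only [coeff, Finsupp.linearCombination_apply, Finsupp.sum, AddMonoidAlgebra.coeff_sum,
    Finsupp.finsetSum_apply, AddMonoidAlgebra.coeff_smul_apply, smul_eq_mul]

lemma coeff_linearCombination_of_maximal {s : (I → ℤ) → LP I} {l : (I → ℤ) →₀ ℤ}
    (hs : ∀ g ∈ l.support, Pointed Iuf Bt g (s g)) {g₀ : I → ℤ} (hg₀ : g₀ ∈ l.support)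
    (hmax : ∀ g ∈ l.support, g₀ ∈ coneBelow Iuf Bt g → g = g₀) :
    coeff (Finsupp.linearCombination ℤ s l) g₀ = l g₀ := by
  rw [coeff_linearCombination, Finsupp.sum, Finset.sum_eq_single_of_mem g₀ hg₀]
  · rw [(hs g₀ hg₀).1, mul_one]
  · intro g hg hne
    by_contra hterm
    exact hne (hmax g hg ((hs g hg).mem_coneBelow (right_ne_zero_of_mul hterm)))

lemma mem_of_pointed_mem_span (hfull : Function.Injective (pstar Iuf Bt))
    {Θ : Set (I → ℤ)} {s : (I → ℤ) → LP I} (hs : ∀ g ∈ Θ, Pointed Iuf Bt g (s g))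
    {h : I → ℤ} {w : LP I} (hw : Pointed Iuf Bt h w)
    (hmem : w ∈ Submodule.span ℤ (s '' Θ)) : h ∈ Θ := by
  classical
  obtain ⟨l, hlΘ, rfl⟩ := (Finsupp.mem_span_image_iff_linearCombination ℤ).1 hmem
  have hs' : ∀ g ∈ l.support, Pointed Iuf Bt g (s g) := fun g hg => hs g (hlΘ hg)
  obtain ⟨g₁, hg₁, hhg₁⟩ : ∃ g ∈ l.support, h ∈ coneBelow Iuf Bt g := by
    have hne : coeff (Finsupp.linearCombination ℤ s l) h ≠ 0 := by rw [hw.1]; exact one_ne_zero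
    rw [coeff_linearCombination] at hne
    obtain ⟨g, hg, hterm⟩ := Finset.exists_ne_zero_of_sum_ne_zero hne
    exact ⟨g, hg, (hs' g hg).mem_coneBelow (right_ne_zero_of_mul hterm)⟩
  -- Maximality for the inclusion of cones is maximality for the dominance preorder.
  obtain ⟨g₀, hg₀T, hmax⟩ := (l.support.filter (h ∈ coneBelow Iuf Bt ·)).exists_maximalFor
    (coneBelow Iuf Bt) ⟨g₁, Finset.mem_filter.2 ⟨hg₁, hhg₁⟩⟩
  obtain ⟨hg₀, hhg₀⟩ := Finset.mem_filter.1 hg₀T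
  have hlead : coeff (Finsupp.linearCombination ℤ s l) g₀ = l g₀ := by
    refine coeff_linearCombination_of_maximal hs' hg₀ fun g hg hg₀g => ?_
    have hsub := coneBelow_subset_of_mem hg₀g
    have hgT : g ∈ l.support.filter (h ∈ coneBelow Iuf Bt ·) :=
      Finset.mem_filter.2 ⟨hg, hsub hhg₀⟩
    exact mem_coneBelow_antisymm hfull (hmax hgT hsub (self_mem_coneBelow g)) hg₀g
  have hg₀h : g₀ ∈ coneBelow Iuf Bt h :=
    hw.mem_coneBelow (by rw [hlead]; exact Finsupp.mem_support_iff.1 hg₀)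
  rw [mem_coneBelow_antisymm hfull hhg₀ hg₀h]
  exact hlΘ hg₀

end Dominance

theorem pointed_basis_same_degrees (hfull : Function.Injective (pstar Iuf Bt))
    (Θ Θ' : Set (I → ℤ)) (s z : (I → ℤ) → LP I)
    (hs : ∀ g ∈ Θ, Pointed Iuf Bt g (s g))
    (hz : ∀ h ∈ Θ', Pointed Iuf Bt h (z h))
    (hspan : Submodule.span ℤ (z '' Θ') = Submodule.span ℤ (s '' Θ)) :
    Θ' = Θ := by
  apply Set.Subset.antisymm
  · intro h hh
    refine mem_of_pointed_mem_span hfull hs (hz h hh) ?_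
    exact hspan ▸ Submodule.subset_span (Set.mem_image_of_mem z hh)
  · intro g hg
    refine mem_of_pointed_mem_span hfull hz (hs g hg) ?_
    exact hspan ▸ Submodule.subset_span (Set.mem_image_of_mem s hg)

end CAFreeze
end
end

section
/- Fix k ∈ I_uf and set F = {k}. Let Θ ⊆ ℤ^I satisfy Θ + f_k ⊆ Θ and d·f_k ∈ Θ for all d ∈ ℕ. Let S = {s_g : g∈Θ} be a Θ-pointed family such that: (i) the factorization property with respect to k holds: x_k · frz_{F,g}(s_g) = frz_{F,g+f_k}(s_{g+f_k}) for all g ∈ Θ; (ii) S has local support under multiplication: for all g₁, g₂ ∈ Θ there is a finite decomposition s_{g₁}·s_{g₂} = Σ_{g∈Θ} b^g·s_g with integer coefficients such that supp s_g ⊆ supp s_{g₁} ∪ supp s_{g₂} whenever b^g ≠ 0; (iii) s_{d·f_k} = x_k^d for all d ∈ ℕ. Then for every g ∈ Θ with k ∉ supp s_g, one has s_{g+f_k} = x_k · s_g. -/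
/-!
Expand `x_k · s_g = s_g · s_{f_k}` by local support as `Σ b^h s_h`. Since both sides are
unitriangular with respect to the dominance order `⪯`, the expansion has `b^{g+f_k} = 1`,
so `supp s_{g+f_k} ⊆ supp s_g ∪ supp x_k = supp s_g` does not contain `k`. Freezing at `k`
is then the identity on `s_g` and on `s_{g+f_k}`, and the factorization property reads
`x_k · s_g = s_{g+f_k}`.
-/

noncomputable section

namespace CAFreeze

variable {I : Type*} [Fintype I] [DecidableEq I]

variable (Iuf : Finset I) (Bt : I → {i // i ∈ Iuf} → ℤ)

/-- `PrecEq Iuf Bt e m` is the dominance relation `e ⪯ m`: `x^e` is one of the monomials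
spanning `LP_{⪯m}`. -/
def PrecEq (e m : I → ℤ) : Prop := ∃ n : {i // i ∈ Iuf} → ℕ, e = m + pstarN Iuf Bt n

section

omit [Fintype I] [DecidableEq I]

variable {Iuf Bt}

lemma pstarN_eq_zero_iff (hfull : Function.Injective (pstar Iuf Bt))
    {n : {i // i ∈ Iuf} → ℕ} : pstarN Iuf Bt n = 0 ↔ n = 0 := by
  refine ⟨fun h => funext fun kk => ?_, fun h => h ▸ pstarN_zero⟩
  have hcast : (fun kk => (n kk : ℤ)) = 0 := hfull (by rw [← pstarN, h, ← pstarN_zero]; rfl)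
  simpa using congrFun hcast kk

lemma PrecEq.trans {e m m' : I → ℤ} (h₁ : PrecEq Iuf Bt e m) (h₂ : PrecEq Iuf Bt m m') :
    PrecEq Iuf Bt e m' := by
  obtain ⟨n₁, rfl⟩ := h₁
  obtain ⟨n₂, rfl⟩ := h₂
  exact ⟨n₂ + n₁, by rw [pstarN_add, add_assoc]⟩

lemma PrecEq.antisymm (hfull : Function.Injective (pstar Iuf Bt)) {e m : I → ℤ}
    (h₁ : PrecEq Iuf Bt e m) (h₂ : PrecEq Iuf Bt m e) : e = m := by
  obtain ⟨n₁, rfl⟩ := h₁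
  obtain ⟨n₂, hn₂⟩ := h₂
  rw [add_assoc, left_eq_add, ← pstarN_add, pstarN_eq_zero_iff hfull] at hn₂
  rw [(add_eq_zero.1 hn₂).1, pstarN_zero, add_zero]

lemma exists_precEq_maximal (hfull : Function.Injective (pstar Iuf Bt))
    (T : Finset (I → ℤ)) (hT : T.Nonempty) :
    ∃ h ∈ T, ∀ h' ∈ T, PrecEq Iuf Bt h h' → h' = h := by
  let StrictlyAbove (a b : I → ℤ) : Prop := a ≠ b ∧ PrecEq Iuf Bt b a
  have : IsStrictOrder (I → ℤ) StrictlyAbove :=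
    { irrefl := fun _ h => h.1 rfl
      trans := fun a b c hab hbc =>
        ⟨fun hac => hbc.1 ((PrecEq.antisymm hfull hab.2 (hac ▸ hbc.2)).trans hac), hbc.2.trans hab.2⟩ }
  obtain ⟨h, hT', hmin⟩ := (Set.wellFoundedOn_iff.1 (T.finite_toSet.wellFoundedOn
    (r := StrictlyAbove))).has_min (T : Set (I → ℤ)) hT
  exact ⟨h, hT', fun h' hh' hle => by_contra fun hne => hmin h' hh' ⟨⟨hne, hle⟩, hh', hT'⟩⟩

lemma Pointed.precEq {g e : I → ℤ} {z : LP I} (hz : Pointed Iuf Bt g z) (he : coeff z e ≠ 0) :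
    PrecEq Iuf Bt e g :=
  hz.2 e (Finsupp.mem_support_iff.2 he)

lemma coeff_mono_mul (f : I → ℤ) (z : LP I) (e : I → ℤ) :
    coeff (mono f * z) e = coeff z (e - f) := by
  rw [coeff, coeff, mono, AddMonoidAlgebra.ofCoeff_single,
    AddMonoidAlgebra.coeff_single_mul_apply]
  simp [neg_add_eq_sub]

lemma Pointed.mono_mul {g : I → ℤ} {z : LP I} (hz : Pointed Iuf Bt g z) (f : I → ℤ) :
    Pointed Iuf Bt (g + f) (mono f * z) := by
  refine ⟨by rw [coeff_mono_mul, add_sub_cancel_right, hz.1], fun e he => ?_⟩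
  rw [Finsupp.mem_support_iff, ← coeff, coeff_mono_mul] at he
  obtain ⟨n, hn⟩ := hz.precEq he
  rw [sub_eq_iff_eq_add] at hn
  exact ⟨n, by rw [hn]; abel⟩

lemma suppz_mono (hfull : Function.Injective (pstar Iuf Bt)) (m : I → ℤ) :
    suppz Iuf Bt m (mono m) = ∅ := by
  refine Set.eq_empty_of_forall_notMem fun i hi => ?_
  obtain ⟨n, hn, ⟨hi, hni⟩⟩ := Set.mem_iUnion₂.1 hi
  have hm : m + pstarN Iuf Bt n = m := by
    by_contra hne
    exact hn (by simp [coeff, mono, Ne.symm hne])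
  rw [add_eq_left, pstarN_eq_zero_iff hfull] at hm
  exact hni (by rw [hm]; rfl)

lemma frz_eq_self {F : Finset I} {g : I → ℤ} {z : LP I}
    (hz : ∀ e, coeff z e ≠ 0 → PrecEq Iuf Bt e g) (hF : Disjoint (F : Set I) (suppz Iuf Bt g z)) :
    frz Iuf Bt F g z = z := by
  classical
  rw [frz, ← AddMonoidAlgebra.coeff_inj, AddMonoidAlgebra.coeff_ofCoeff,
    Finsupp.filter_eq_self_iff]
  intro e he
  obtain ⟨n, rfl⟩ := hz e he
  refine ⟨n, rfl, Set.eq_empty_of_forall_notMem fun i ⟨hin, hiF⟩ => ?_⟩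
  exact Set.disjoint_left.1 hF hiF (Set.mem_biUnion he hin)

lemma coeff_finsupp_sum (b : (I → ℤ) →₀ ℤ) (s : (I → ℤ) → LP I) (e : I → ℤ) :
    coeff (b.sum fun g a => a • s g) e = ∑ h ∈ b.support, b h * coeff (s h) e := by
  rw [Finsupp.sum, coeff, AddMonoidAlgebra.coeff_sum, Finsupp.finsetSum_apply]
  rfl

/-- A `⪯`-maximal index `h` with `h ⋠ g₀` would survive as the coefficient of `x^h` in the sum. -/
lemma precEq_of_mem_expansion_support (hfull : Function.Injective (pstar Iuf Bt))
    {g₀ : I → ℤ} {x : LP I} (hx : ∀ e, coeff x e ≠ 0 → PrecEq Iuf Bt e g₀)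
    {b : (I → ℤ) →₀ ℤ} {s : (I → ℤ) → LP I} (hs : ∀ h ∈ b.support, Pointed Iuf Bt h (s h))
    (hb : x = b.sum fun h a => a • s h) :
    ∀ h ∈ b.support, PrecEq Iuf Bt h g₀ := by
  classical
  by_contra! hT
  obtain ⟨h, hhT, hmax⟩ := exists_precEq_maximal hfull
    (b.support.filter fun h => ¬ PrecEq Iuf Bt h g₀) (by simpa [Finset.Nonempty] using hT)
  rw [Finset.mem_filter] at hhT
  have hcoeff : coeff x h = b h := by
    rw [hb, coeff_finsupp_sum, Finset.sum_eq_single_of_mem h hhT.1, (hs h hhT.1).1, mul_one]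
    intro h' hh' hne
    by_contra hterm
    have hle : PrecEq Iuf Bt h h' := (hs h' hh').precEq (right_ne_zero_of_mul hterm)
    by_cases hh'g₀ : PrecEq Iuf Bt h' g₀
    · exact hhT.2 (hle.trans hh'g₀)
    · exact hne (hmax h' (Finset.mem_filter.2 ⟨hh', hh'g₀⟩) hle)
  exact hhT.2 (hx h (hcoeff ▸ Finsupp.mem_support_iff.1 hhT.1))

lemma expansion_apply_self_eq_one (hfull : Function.Injective (pstar Iuf Bt))
    {g₀ : I → ℤ} {x : LP I} (hx : Pointed Iuf Bt g₀ x)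
    {b : (I → ℤ) →₀ ℤ} {s : (I → ℤ) → LP I} (hs : ∀ h ∈ b.support, Pointed Iuf Bt h (s h))
    (hb : x = b.sum fun h a => a • s h) :
    b g₀ = 1 := by
  have hsum : b g₀ * coeff (s g₀) g₀ = 1 := by
    rw [← hx.1, hb, coeff_finsupp_sum, Finset.sum_eq_single g₀]
    · intro h hh hne
      by_contra hterm
      exact hne (PrecEq.antisymm hfull
        (precEq_of_mem_expansion_support hfull (fun _ => hx.precEq) hs hb h hh)
        ((hs h hh).precEq (right_ne_zero_of_mul hterm)))
    · intro hg₀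
      rw [Finsupp.notMem_support_iff.1 hg₀, zero_mul]
  have hg₀ : g₀ ∈ b.support := Finsupp.mem_support_iff.2 (left_ne_zero_of_mul_eq_one hsum)
  rwa [(hs g₀ hg₀).1, mul_one] at hsum

end

theorem shift_product_of_local_support (hfull : Function.Injective (pstar Iuf Bt))
    (k : I)
    (Θ : Set (I → ℤ)) (hΘ : ∀ g ∈ Θ, g + Pi.single k (1 : ℤ) ∈ Θ)
    (hΘ' : ∀ d : ℕ, (d • Pi.single k (1 : ℤ) : I → ℤ) ∈ Θ)
    (s : (I → ℤ) → LP I) (hs : ∀ g ∈ Θ, Pointed Iuf Bt g (s g))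
    -- (i) the factorization property with respect to k, for F = {k}
    (hfact : ∀ g ∈ Θ, mono (Pi.single k (1 : ℤ)) * frz Iuf Bt {k} g (s g) =
      frz Iuf Bt {k} (g + Pi.single k (1 : ℤ)) (s (g + Pi.single k (1 : ℤ))))
    -- (ii) S has local support under multiplication
    (hmul : ∀ g₁ ∈ Θ, ∀ g₂ ∈ Θ, ∃ b : (I → ℤ) →₀ ℤ, (b.support : Set (I → ℤ)) ⊆ Θ ∧
      s g₁ * s g₂ = (b.sum fun g a => a • s g) ∧
      ∀ g, b g ≠ 0 →
        suppz Iuf Bt g (s g) ⊆ suppz Iuf Bt g₁ (s g₁) ∪ suppz Iuf Bt g₂ (s g₂))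
    -- (iii) s_{d·f_k} = x_k^d for all d ∈ ℕ
    (hxk : ∀ d : ℕ, s (d • Pi.single k (1 : ℤ)) = mono (Pi.single k (1 : ℤ)) ^ d) :
    ∀ g ∈ Θ, k ∉ suppz Iuf Bt g (s g) →
      s (g + Pi.single k (1 : ℤ)) = mono (Pi.single k (1 : ℤ)) * s g := by
  intro g hg hkg
  set fk : I → ℤ := Pi.single k (1 : ℤ)
  have hfk : fk ∈ Θ := by simpa using hΘ' 1
  have hsfk : s fk = mono fk := by simpa using hxk 1
  obtain ⟨b, hbΘ, hprod, hbsupp⟩ := hmul g hg fk hfk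
  rw [hsfk, mul_comm] at hprod
  have hb : b (g + fk) = 1 :=
    expansion_apply_self_eq_one hfull ((hs g hg).mono_mul fk) (fun h hh => hs h (hbΘ hh)) hprod
  have hkgfk : k ∉ suppz Iuf Bt (g + fk) (s (g + fk)) := fun hk =>
    (hbsupp _ (hb ▸ one_ne_zero) hk).elim hkg
      (by rw [hsfk, suppz_mono hfull]; exact id)
  have hfrz : ∀ h ∈ Θ, k ∉ suppz Iuf Bt h (s h) → frz Iuf Bt {k} h (s h) = s h :=
    fun h hh hkh => frz_eq_self (fun _ => (hs h hh).precEq) (by simpa using hkh)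
  have hfactg := hfact g hg
  rwa [hfrz g hg hkg, hfrz _ (hΘ g hg) hkgfk, eq_comm] at hfactg

end CAFreeze
end
end
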